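/- arXiv:1311.7165 — 4 statements merged into one kernel-verified Lean document; each statement's English description precedes it below -/
import Mathlib

section
/- For a kernel K satisfying ∫_{ℝ^N} min(|x|²,1)K(x)dx < ∞, if there exist 0 ≤ s₁ ≤ s₂ such that liminf_{|x|→0⁺} K(x)|x|^{N+2s₁} > 0 and limsup_{|x|→0⁺} K(x)|x|^{N+2s₂} < ∞, then the critical exponent s₀ satisfies s₁ ≤ s₀ ≤ s₂. -/
open MeasureTheory Filter Topology Set
open scoped ENNReal

noncomputable def kernelTail (N : ℕ) (K : EuclideanSpace ℝ (Fin N) → ℝ) (r : ℝ) : ℝ≥0∞ :=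
  ∫⁻ y in {y : EuclideanSpace ℝ (Fin N) | r ≤ ‖y‖}, ENNReal.ofReal (K y)

def kernelIntegrable (N : ℕ) (K : EuclideanSpace ℝ (Fin N) → ℝ) : Prop :=
  ∫⁻ x : EuclideanSpace ℝ (Fin N), ENNReal.ofReal (min (‖x‖ ^ 2) 1 * K x) < ⊤

noncomputable def kernelS0 (N : ℕ) (K : EuclideanSpace ℝ (Fin N) → ℝ) : ℝ :=
  sSup {s : ℝ | 0 ≤ s ∧
    Tendsto (fun r : ℝ => ENNReal.ofReal (r ^ (2 * s)) * kernelTail N K r) (𝓝[>] (0 : ℝ)) (𝓝 ⊤)}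

/-!
The tail `T(r) = ∫_{|y| ≥ r} K` is compared with the tail of a pure power. Near the origin
`K ≥ c |x|^{-N-2s₁}` puts mass `≳ r^{-2s₁}` in a ball of radius `r/2` inside the annulus
`r ≤ |y| < 2r`, so `r^{2s} T(r) → ∞` for `s < s₁`. Conversely, for `s₂ < t`,
`K ≤ C |x|^{-N-2t}` near the origin, and by homogeneity of Haar measure
`∫_{|y| ≥ r} |y|^{-N-2t} = r^{-2t} ∫_{|y| ≥ 1} |y|^{-N-2t}`, the last integral being finite
since `N + 2t > N`; the tail beyond a fixed radius is finite by the integrability of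
`min(|x|², 1) K`. Hence `r^{2s} T(r) → 0` for `s > t`.
-/

section Homogeneity

open Module

variable {E : Type*} [NormedAddCommGroup E] [NormedSpace ℝ E] [MeasurableSpace E] [BorelSpace E]
  [FiniteDimensional ℝ E] (μ : Measure E) [μ.IsAddHaarMeasure]

theorem lintegral_comp_smul_of_pos (f : E → ℝ≥0∞) {R : ℝ} (hR : 0 < R) :
    ∫⁻ x, f (R • x) ∂μ = ENNReal.ofReal ((R ^ finrank ℝ E)⁻¹) * ∫⁻ x, f x ∂μ := by
  let e : E ≃ᵐ E := (Homeomorph.smul (Units.mk0 R hR.ne')).toMeasurableEquiv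
  change ∫⁻ x, f (e x) ∂μ = _
  rw [← lintegral_map_equiv f e, show ⇑e = (R • ·) from rfl, Measure.map_addHaar_smul μ hR.ne',
    lintegral_smul_measure, abs_of_pos (by positivity), smul_eq_mul]

theorem setLIntegral_rpow_neg_norm_ge_eq_mul (p : ℝ) {r : ℝ} (hr : 0 < r) :
    ∫⁻ y in {y : E | r ≤ ‖y‖}, ENNReal.ofReal (‖y‖ ^ (-p)) ∂μ =
      ENNReal.ofReal (r ^ ((finrank ℝ E : ℝ) - p)) *
        ∫⁻ y in {y : E | 1 ≤ ‖y‖}, ENNReal.ofReal (‖y‖ ^ (-p)) ∂μ := by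
  have hscale : ∀ y : E, {y : E | r ≤ ‖y‖}.indicator (fun y => ENNReal.ofReal (‖y‖ ^ (-p))) y =
      ENNReal.ofReal (r ^ (-p)) *
        {y : E | 1 ≤ ‖y‖}.indicator (fun y => ENNReal.ofReal (‖y‖ ^ (-p))) (r⁻¹ • y) := by
    intro y
    obtain ⟨z, rfl⟩ : ∃ z, y = r • z := ⟨r⁻¹ • y, (smul_inv_smul₀ hr.ne' y).symm⟩
    have hiff : r ≤ ‖r • z‖ ↔ 1 ≤ ‖z‖ := by
      rw [norm_smul, Real.norm_of_nonneg hr.le, le_mul_iff_one_le_right hr]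
    simp only [inv_smul_smul₀ hr.ne', indicator_apply, mem_ofPred_eq, hiff]
    split_ifs
    · rw [norm_smul, Real.norm_of_nonneg hr.le, Real.mul_rpow hr.le (norm_nonneg z),
        ENNReal.ofReal_mul (by positivity)]
    · rw [mul_zero]
  have hmeas : ∀ a : ℝ, MeasurableSet {y : E | a ≤ ‖y‖} := fun a =>
    measurableSet_le measurable_const measurable_norm
  rw [← lintegral_indicator (hmeas r), ← lintegral_indicator (hmeas 1), funext hscale,
    lintegral_const_mul' _ _ ENNReal.ofReal_ne_top,
    lintegral_comp_smul_of_pos μ _ (inv_pos.2 hr), inv_pow, inv_inv, ← mul_assoc,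
    ← ENNReal.ofReal_mul (by positivity), Real.rpow_sub hr, Real.rpow_natCast, Real.rpow_neg hr.le,
    div_eq_mul_inv, mul_comm (r ^ p)⁻¹]

theorem setLIntegral_rpow_neg_norm_ge_one_lt_top {p : ℝ} (hp : (finrank ℝ E : ℝ) < p) :
    ∫⁻ y in {y : E | 1 ≤ ‖y‖}, ENNReal.ofReal (‖y‖ ^ (-p)) ∂μ < ∞ := by
  have hle : ∀ y ∈ {y : E | 1 ≤ ‖y‖},
      ENNReal.ofReal (‖y‖ ^ (-p)) ≤ ENNReal.ofReal (2 ^ p) * ENNReal.ofReal ((1 + ‖y‖) ^ (-p)) := by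
    intro y (hy : 1 ≤ ‖y‖)
    rw [← ENNReal.ofReal_mul (by positivity)]
    refine ENNReal.ofReal_le_ofReal ?_
    calc ‖y‖ ^ (-p) ≤ ((1 + ‖y‖) / 2) ^ (-p) :=
          Real.rpow_le_rpow_of_nonpos (by positivity) (by linarith) (by linarith)
      _ = 2 ^ p * (1 + ‖y‖) ^ (-p) := by
          rw [Real.div_rpow (by positivity) zero_le_two, Real.rpow_neg zero_le_two, div_inv_eq_mul,
            mul_comm]
  calc ∫⁻ y in {y : E | 1 ≤ ‖y‖}, ENNReal.ofReal (‖y‖ ^ (-p)) ∂μ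
      ≤ ∫⁻ y, ENNReal.ofReal (2 ^ p) * ENNReal.ofReal ((1 + ‖y‖) ^ (-p)) ∂μ :=
        (setLIntegral_mono' (measurableSet_le measurable_const measurable_norm) hle).trans
          (setLIntegral_le_lintegral _ _)
    _ = ENNReal.ofReal (2 ^ p) * ∫⁻ y, ENNReal.ofReal ((1 + ‖y‖) ^ (-p)) ∂μ :=
        lintegral_const_mul' _ _ ENNReal.ofReal_ne_top
    _ < ∞ := ENNReal.mul_lt_top ENNReal.ofReal_lt_top (finite_integral_one_add_norm hp)

end Homogeneity

theorem exists_pos_forall_norm_lt_of_eventually_nhdsNE {E : Type*} [SeminormedAddCommGroup E]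
    {P : E → Prop} (h : ∀ᶠ x in 𝓝[≠] 0, P x) : ∃ δ > 0, ∀ x, x ≠ 0 → ‖x‖ < δ → P x := by
  obtain ⟨δ, hδ, H⟩ := Metric.eventually_nhds_iff.1 (eventually_nhdsWithin_iff.1 h)
  exact ⟨δ, hδ, fun x hx hxδ => H (by rwa [dist_zero_right]) hx⟩

theorem tendsto_ofReal_rpow_nhdsGT_zero {a : ℝ} (ha : 0 < a) :
    Tendsto (fun r : ℝ => ENNReal.ofReal (r ^ a)) (𝓝[>] 0) (𝓝 0) := by
  have h := (Real.continuousAt_rpow_const 0 a (Or.inr ha.le)).tendsto.mono_left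
    (nhdsWithin_le_nhds (s := Ioi 0))
  rw [Real.zero_rpow ha.ne'] at h
  simpa using ENNReal.tendsto_ofReal h

section Kernel

variable {N : ℕ} {K : EuclideanSpace ℝ (Fin N) → ℝ}

theorem kernelTail_lt_top (hint : kernelIntegrable N K) {δ : ℝ} (hδ : 0 < δ) :
    kernelTail N K δ < ∞ := by
  have hm : 0 < min (δ ^ 2) 1 := by positivity
  have h : ENNReal.ofReal (min (δ ^ 2) 1) * kernelTail N K δ ≤
      ∫⁻ x, ENNReal.ofReal (min (‖x‖ ^ 2) 1 * K x) := by
    rw [kernelTail, ← lintegral_const_mul' _ _ ENNReal.ofReal_ne_top]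
    refine (setLIntegral_mono' (measurableSet_le measurable_const measurable_norm)
      fun y (hy : δ ≤ ‖y‖) => ?_).trans (setLIntegral_le_lintegral _ _)
    rw [ENNReal.ofReal_mul (by positivity)]
    gcongr
  exact ENNReal.lt_top_of_mul_ne_top_right (h.trans_lt hint).ne (ENNReal.ofReal_pos.2 hm).ne'

theorem le_kernelTail_of_le_mul_rpow (hN : 1 ≤ N) {c p δ r : ℝ} (hc : 0 ≤ c) (hp : 0 ≤ p)
    (hK : ∀ x, x ≠ 0 → ‖x‖ < δ → c ≤ K x * ‖x‖ ^ p) (hr : 0 < r) (h2r : 2 * r ≤ δ) :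
    ENNReal.ofReal (c * 2 ^ (-(p + N)) * r ^ ((N : ℝ) - p)) *
        volume (Metric.ball (0 : EuclideanSpace ℝ (Fin N)) 1) ≤ kernelTail N K r := by
  have : Nonempty (Fin N) := ⟨⟨0, hN⟩⟩
  obtain ⟨x₀, hx₀⟩ := exists_norm_eq (EuclideanSpace ℝ (Fin N)) (by positivity : 0 ≤ 3 * r / 2)
  have hball : ∀ y ∈ Metric.ball x₀ (r / 2), r ≤ ‖y‖ ∧ ‖y‖ < 2 * r := by
    intro y hy
    rw [Metric.mem_ball, dist_eq_norm] at hy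
    constructor
    · linarith [norm_sub_norm_le x₀ y, norm_sub_rev x₀ y]
    · linarith [norm_sub_norm_le y x₀]
  have hKy : ∀ y ∈ Metric.ball x₀ (r / 2),
      ENNReal.ofReal (c * (2 * r) ^ (-p)) ≤ ENNReal.ofReal (K y) := by
    intro y hy
    obtain ⟨hry, hy2r⟩ := hball y hy
    have hy0 : 0 < ‖y‖ := hr.trans_le hry
    refine ENNReal.ofReal_le_ofReal ?_
    calc c * (2 * r) ^ (-p) ≤ c * ‖y‖ ^ (-p) :=
          mul_le_mul_of_nonneg_left (Real.rpow_le_rpow_of_nonpos hy0 hy2r.le (by linarith)) hc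
      _ = c / ‖y‖ ^ p := by rw [Real.rpow_neg hy0.le, div_eq_mul_inv]
      _ ≤ K y := (div_le_iff₀ (by positivity)).2
          (hK y (norm_pos_iff.1 hy0) (hy2r.trans_le h2r))
  have hconst : c * 2 ^ (-(p + N)) * r ^ ((N : ℝ) - p) = c * (2 * r) ^ (-p) * (r / 2) ^ N := by
    simp only [Real.mul_rpow zero_le_two hr.le, Real.rpow_sub hr, Real.rpow_neg zero_le_two,
      Real.rpow_neg hr.le, Real.rpow_add two_pos, Real.rpow_natCast, div_pow]
    field_simp
  calc ENNReal.ofReal (c * 2 ^ (-(p + N)) * r ^ ((N : ℝ) - p)) *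
        volume (Metric.ball (0 : EuclideanSpace ℝ (Fin N)) 1)
      = ENNReal.ofReal (c * (2 * r) ^ (-p)) * volume (Metric.ball x₀ (r / 2)) := by
        rw [Measure.addHaar_ball volume x₀ (by positivity), finrank_euclideanSpace_fin, ← mul_assoc,
          ← ENNReal.ofReal_mul (by positivity), hconst]
    _ = ∫⁻ _ in Metric.ball x₀ (r / 2), ENNReal.ofReal (c * (2 * r) ^ (-p)) :=
        (setLIntegral_const _ _).symm
    _ ≤ ∫⁻ y in Metric.ball x₀ (r / 2), ENNReal.ofReal (K y) :=
        setLIntegral_mono' measurableSet_ball hKy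
    _ ≤ kernelTail N K r := lintegral_mono_set fun y hy => (hball y hy).1

theorem kernelTail_le_of_mul_rpow_le {C p q δ r : ℝ} (hδ : δ ≤ 1) (hqp : q ≤ p)
    (hK : ∀ x, x ≠ 0 → ‖x‖ < δ → K x * ‖x‖ ^ q ≤ C) (hr : 0 < r) :
    kernelTail N K r ≤
      ENNReal.ofReal C *
          (∫⁻ y in {y : EuclideanSpace ℝ (Fin N) | r ≤ ‖y‖}, ENNReal.ofReal (‖y‖ ^ (-p))) +
        kernelTail N K δ := by
  have hKy : ∀ y ∈ {y : EuclideanSpace ℝ (Fin N) | r ≤ ‖y‖} ∩ {y | ‖y‖ < δ},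
      ENNReal.ofReal (K y) ≤ ENNReal.ofReal C * ENNReal.ofReal (‖y‖ ^ (-p)) := by
    rintro y ⟨hry, hyδ⟩
    have hy0 : 0 < ‖y‖ := hr.trans_le hry
    have hKq : K y = K y * ‖y‖ ^ q * ‖y‖ ^ (-q) := by
      rw [Real.rpow_neg hy0.le, mul_assoc, mul_inv_cancel₀ (by positivity), mul_one]
    calc ENNReal.ofReal (K y) ≤ ENNReal.ofReal (C * ‖y‖ ^ (-q)) := by
          rw [hKq]
          exact ENNReal.ofReal_le_ofReal (mul_le_mul_of_nonneg_right
            (hK y (norm_pos_iff.1 hy0) hyδ) (by positivity))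
      _ ≤ ENNReal.ofReal C * ENNReal.ofReal (‖y‖ ^ (-p)) := by
          rw [ENNReal.ofReal_mul' (by positivity)]
          gcongr ENNReal.ofReal C * ENNReal.ofReal ?_
          exact Real.rpow_le_rpow_of_exponent_ge hy0 (hyδ.le.trans hδ) (neg_le_neg hqp)
  have hcover : {y : EuclideanSpace ℝ (Fin N) | r ≤ ‖y‖} ⊆
      ({y | r ≤ ‖y‖} ∩ {y | ‖y‖ < δ}) ∪ {y | δ ≤ ‖y‖} := fun y hy =>
    (lt_or_ge ‖y‖ δ).imp (fun h => ⟨hy, h⟩) id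
  calc kernelTail N K r
      ≤ (∫⁻ y in {y | r ≤ ‖y‖} ∩ {y | ‖y‖ < δ}, ENNReal.ofReal (K y)) + kernelTail N K δ :=
        (lintegral_mono_set hcover).trans (lintegral_union_le _ _ _)
    _ ≤ (∫⁻ y in {y | r ≤ ‖y‖} ∩ {y | ‖y‖ < δ},
          ENNReal.ofReal C * ENNReal.ofReal (‖y‖ ^ (-p))) + kernelTail N K δ := by
        gcongr 1
        exact setLIntegral_mono (by fun_prop) hKy
    _ ≤ (∫⁻ y in {y | r ≤ ‖y‖}, ENNReal.ofReal C * ENNReal.ofReal (‖y‖ ^ (-p))) +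
          kernelTail N K δ := by
        gcongr 1
        exact lintegral_mono_set inter_subset_left
    _ = _ := by rw [lintegral_const_mul' _ _ ENNReal.ofReal_ne_top]

theorem tendsto_rpow_mul_kernelTail_nhds_top (hN : 1 ≤ N) {s s₁ : ℝ}
    (hlower : ∃ c : ℝ, 0 < c ∧
      ∀ᶠ x in 𝓝[≠] (0 : EuclideanSpace ℝ (Fin N)), c ≤ K x * ‖x‖ ^ ((N : ℝ) + 2 * s₁))
    (hs : 0 ≤ s) (hss₁ : s < s₁) :
    Tendsto (fun r : ℝ => ENNReal.ofReal (r ^ (2 * s)) * kernelTail N K r) (𝓝[>] 0) (𝓝 ⊤) := by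
  obtain ⟨c, hc, hev⟩ := hlower
  obtain ⟨δ, hδ, hK⟩ := exists_pos_forall_norm_lt_of_eventually_nhdsNE hev
  set a : ℝ := c * 2 ^ (-((N + 2 * s₁) + N))
  have ha : 0 < a := mul_pos hc (by positivity)
  set v := volume (Metric.ball (0 : EuclideanSpace ℝ (Fin N)) 1)
  have hv : v ≠ 0 := (Metric.measure_ball_pos _ _ one_pos).ne'
  have hbound : ∀ᶠ r in 𝓝[>] 0,
      ENNReal.ofReal (a * r ^ (2 * s - 2 * s₁)) * v ≤
        ENNReal.ofReal (r ^ (2 * s)) * kernelTail N K r := by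
    filter_upwards [Ioo_mem_nhdsGT (half_pos hδ)] with r ⟨hr, hrδ⟩
    calc ENNReal.ofReal (a * r ^ (2 * s - 2 * s₁)) * v
        = ENNReal.ofReal (r ^ (2 * s)) *
            (ENNReal.ofReal (a * r ^ ((N : ℝ) - (N + 2 * s₁))) * v) := by
          have hexp : r ^ (2 * s) * (a * r ^ ((N : ℝ) - (N + 2 * s₁))) =
              a * r ^ (2 * s - 2 * s₁) := by
            rw [mul_left_comm, ← Real.rpow_add hr]
            ring_nf
          rw [← mul_assoc, ← ENNReal.ofReal_mul (by positivity), hexp]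
      _ ≤ ENNReal.ofReal (r ^ (2 * s)) * kernelTail N K r := by
          gcongr
          exact le_kernelTail_of_le_mul_rpow hN hc.le (add_nonneg N.cast_nonneg (by linarith)) hK
            hr (by linarith)
  have hlim : Tendsto (fun r : ℝ => ENNReal.ofReal (a * r ^ (2 * s - 2 * s₁)) * v)
      (𝓝[>] 0) (𝓝 ⊤) := by
    have h := ENNReal.tendsto_ofReal_atTop.comp
      ((tendsto_rpow_neg_nhdsGT_zero (by linarith : 2 * s - 2 * s₁ < 0)).const_mul_atTop ha)
    simpa [ENNReal.top_mul hv] using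
      ENNReal.Tendsto.mul_const (b := v) h (Or.inr measure_ball_lt_top.ne)
  exact tendsto_nhds_top_mono hlim hbound

theorem tendsto_rpow_mul_kernelTail_nhds_zero (hint : kernelIntegrable N K) {s s₂ : ℝ}
    (hupper : ∃ C : ℝ,
      ∀ᶠ x in 𝓝[≠] (0 : EuclideanSpace ℝ (Fin N)), K x * ‖x‖ ^ ((N : ℝ) + 2 * s₂) ≤ C)
    (hs₂ : 0 ≤ s₂) (hs : s₂ < s) :
    Tendsto (fun r : ℝ => ENNReal.ofReal (r ^ (2 * s)) * kernelTail N K r) (𝓝[>] 0) (𝓝 0) := by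
  obtain ⟨C, hev⟩ := hupper
  obtain ⟨δ, hδ, hK⟩ := exists_pos_forall_norm_lt_of_eventually_nhdsNE hev
  obtain ⟨t, hs₂t, hts⟩ := exists_between hs
  -- On `‖x‖ ≤ 1` the exponent may be raised from `N + 2 s₂` to `N + 2 t > N`, which makes
  -- `‖x‖ ^ (-(N + 2 t))` integrable at infinity even when `s₂ = 0`.
  set J := ∫⁻ y in {y : EuclideanSpace ℝ (Fin N) | 1 ≤ ‖y‖}, ENNReal.ofReal (‖y‖ ^ (-(N + 2 * t)))
  have hJ : J ≠ ∞ := (setLIntegral_rpow_neg_norm_ge_one_lt_top _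
    (by rw [finrank_euclideanSpace_fin]; linarith)).ne
  set δ' := min δ 1
  have hT : kernelTail N K δ' ≠ ∞ := (kernelTail_lt_top hint (lt_min hδ one_pos)).ne
  have hbound : ∀ᶠ r in 𝓝[>] 0, ENNReal.ofReal (r ^ (2 * s)) * kernelTail N K r ≤
      ENNReal.ofReal C * J * ENNReal.ofReal (r ^ (2 * s - 2 * t)) +
        ENNReal.ofReal (r ^ (2 * s)) * kernelTail N K δ' := by
    filter_upwards [self_mem_nhdsWithin] with r (hr : 0 < r)
    have hpow : ENNReal.ofReal (r ^ (2 * s)) * ENNReal.ofReal (r ^ ((N : ℝ) - (N + 2 * t))) =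
        ENNReal.ofReal (r ^ (2 * s - 2 * t)) := by
      rw [← ENNReal.ofReal_mul (by positivity), ← Real.rpow_add hr]
      ring_nf
    have htail := kernelTail_le_of_mul_rpow_le (min_le_right δ 1)
      (by linarith : (N : ℝ) + 2 * s₂ ≤ N + 2 * t)
      (fun x hx hxδ => hK x hx (hxδ.trans_le (min_le_left δ 1))) hr
    rw [setLIntegral_rpow_neg_norm_ge_eq_mul _ _ hr, finrank_euclideanSpace_fin] at htail
    calc ENNReal.ofReal (r ^ (2 * s)) * kernelTail N K r
        ≤ ENNReal.ofReal (r ^ (2 * s)) * (ENNReal.ofReal C *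
            (ENNReal.ofReal (r ^ ((N : ℝ) - (N + 2 * t))) * J) + kernelTail N K δ') := by
          gcongr
      _ = _ := by rw [mul_add, ← hpow]; ring
  have hlim : Tendsto (fun r : ℝ => ENNReal.ofReal C * J * ENNReal.ofReal (r ^ (2 * s - 2 * t)) +
      ENNReal.ofReal (r ^ (2 * s)) * kernelTail N K δ') (𝓝[>] 0) (𝓝 0) := by
    have h₁ := ENNReal.Tendsto.const_mul (a := ENNReal.ofReal C * J)
      (tendsto_ofReal_rpow_nhdsGT_zero (by linarith : 0 < 2 * s - 2 * t))
      (Or.inr (ENNReal.mul_ne_top ENNReal.ofReal_ne_top hJ))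
    have h₂ := ENNReal.Tendsto.mul_const
      (tendsto_ofReal_rpow_nhdsGT_zero (by linarith : 0 < 2 * s)) (Or.inr hT)
    simpa using h₁.add h₂
  exact tendsto_of_tendsto_of_tendsto_of_le_of_le' tendsto_const_nhds hlim
    (Eventually.of_forall fun _ => zero_le) hbound

end Kernel

theorem stmt3_general (N : ℕ) (hN : 1 ≤ N) (K : EuclideanSpace ℝ (Fin N) → ℝ)
    (hint : kernelIntegrable N K)
    (s₁ s₂ : ℝ) (hs₁ : 0 ≤ s₁) (hs₁₂ : s₁ ≤ s₂)
    (hlower : ∃ c : ℝ, 0 < c ∧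
      ∀ᶠ x in 𝓝[≠] (0 : EuclideanSpace ℝ (Fin N)), c ≤ K x * ‖x‖ ^ ((N : ℝ) + 2 * s₁))
    (hupper : ∃ C : ℝ,
      ∀ᶠ x in 𝓝[≠] (0 : EuclideanSpace ℝ (Fin N)), K x * ‖x‖ ^ ((N : ℝ) + 2 * s₂) ≤ C) :
    s₁ ≤ kernelS0 N K ∧ kernelS0 N K ≤ s₂ := by
  unfold kernelS0
  have hs₂ : 0 ≤ s₂ := hs₁.trans hs₁₂
  have hle : ∀ s ∈ {s : ℝ | 0 ≤ s ∧ Tendsto (fun r : ℝ => ENNReal.ofReal (r ^ (2 * s)) *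
      kernelTail N K r) (𝓝[>] (0 : ℝ)) (𝓝 ⊤)}, s ≤ s₂ := fun s hs => le_of_not_gt fun h =>
    ENNReal.zero_ne_top <| tendsto_nhds_unique
      (tendsto_rpow_mul_kernelTail_nhds_zero hint hupper hs₂ h) hs.2
  refine ⟨le_of_forall_lt_imp_le_of_dense fun t ht => ?_, Real.sSup_le hle hs₂⟩
  -- `sSup ∅ = 0` in `ℝ`, so the supremum is nonnegative even if no exponent qualifies.
  rcases lt_or_ge t 0 with ht0 | ht0
  · exact ht0.le.trans (Real.sSup_nonneg fun s hs => hs.1)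
  · exact le_csSup ⟨s₂, hle⟩ ⟨ht0, tendsto_rpow_mul_kernelTail_nhds_top hN hlower ht0 ht⟩

theorem stmt3 (N : ℕ) (hN : 1 ≤ N) (K : EuclideanSpace ℝ (Fin N) → ℝ)
    (hmeas : Measurable K)
    (hpos : ∀ x : EuclideanSpace ℝ (Fin N), x ≠ 0 → 0 < K x)
    (hint : kernelIntegrable N K)
    (s₁ s₂ : ℝ) (hs₁ : 0 ≤ s₁) (hs₁₂ : s₁ ≤ s₂)
    (hlower : ∃ c : ℝ, 0 < c ∧
      ∀ᶠ x in 𝓝[≠] (0 : EuclideanSpace ℝ (Fin N)), c ≤ K x * ‖x‖ ^ ((N : ℝ) + 2 * s₁))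
    (hupper : ∃ C : ℝ,
      ∀ᶠ x in 𝓝[≠] (0 : EuclideanSpace ℝ (Fin N)), K x * ‖x‖ ^ ((N : ℝ) + 2 * s₂) ≤ C) :
    s₁ ≤ kernelS0 N K ∧ kernelS0 N K ≤ s₂ :=
  stmt3_general N hN K hint s₁ s₂ hs₁ hs₁₂ hlower hupper
end

section
/- Let K satisfy the integrability condition, the radial monotonicity K(x) ≥ K(y) for |x| ≤ |y|, and suppose liminf_{r→0⁺} r^{2s₀} ∫_{|y|≥r} K(y)dy ∈ (0, ∞] where s₀ ∈ (0,1] is the critical exponent. Then there exists C > 0 such that for every x ∈ ℝ^N and every measurable set E ⊂ ℝ^N with 0 < |E| < ∞ sufficiently small, ∫_{E^c} K(x − y) dy ≥ C |E|^{−2s₀/N}. -/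
open MeasureTheory Filter Topology Set
open scoped ENNReal

/-!
For a radially nonincreasing kernel, the ball `B` centred at `x` with `|B| = |E|` minimises
`∫_{Eᶜ} K(x - y) dy`: on `E \ B` the integrand is at most its value `t` on the sphere `∂B`, on
`B \ E` it is at least `t`, and these two pieces have equal measure. The integral over `Bᶜ` is the
tail `∫_{|y| ≥ ρ} K`, where `|E| = ω ρ^N` with `ω` the volume of the unit ball; for small `ρ`
the liminf hypothesis bounds it below by `c ρ^{-2s₀} = c ω^{2s₀/N} |E|^{-2s₀/N}`.
-/

open Metric Module

theorem setLIntegral_compl_le_of_measure_eq {α : Type*} [MeasurableSpace α] {μ : Measure α}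
    {f : α → ℝ≥0∞} {B E : Set α} {t : ℝ≥0∞} (hB : MeasurableSet B) (hE : MeasurableSet E)
    (hμ : μ B = μ E) (hfin : μ E ≠ ∞) (hout : ∀ y ∉ B, f y ≤ t)
    (hin : ∀ᵐ y ∂μ, y ∈ B → t ≤ f y) :
    ∫⁻ y in Bᶜ, f y ∂μ ≤ ∫⁻ y in Eᶜ, f y ∂μ := by
  have hswap : μ (E \ B) = μ (B \ E) :=
    measure_sdiff_symm hE.nullMeasurableSet hB.nullMeasurableSet hμ.symm
      (measure_ne_top_of_subset inter_subset_left hfin)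
  have hexchange : ∫⁻ y in E \ B, f y ∂μ ≤ ∫⁻ y in B \ E, f y ∂μ :=
    calc ∫⁻ y in E \ B, f y ∂μ ≤ ∫⁻ _ in E \ B, t ∂μ :=
          setLIntegral_mono measurable_const fun y hy => hout y hy.2
      _ = ∫⁻ _ in B \ E, t ∂μ := by rw [setLIntegral_const, setLIntegral_const, hswap]
      _ ≤ ∫⁻ y in B \ E, f y ∂μ :=
          setLIntegral_mono_ae' (hB.diff hE) (hin.mono fun y hy hyBE => hy hyBE.1)
  rw [← lintegral_inter_add_sdiff f Bᶜ hE.compl, ← lintegral_inter_add_sdiff f Eᶜ hB.compl,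
    compl_sdiff_compl, compl_sdiff_compl, inter_comm]
  gcongr

theorem setLIntegral_compl_ball_sub {E : Type*} [NormedAddCommGroup E] [MeasurableSpace E]
    [BorelSpace E] (μ : Measure E) [μ.IsNegInvariant] [μ.IsAddLeftInvariant]
    (g : E → ℝ≥0∞) (x : E) (ρ : ℝ) :
    ∫⁻ y in (ball x ρ)ᶜ, g (x - y) ∂μ = ∫⁻ z in {z | ρ ≤ ‖z‖}, g z ∂μ := by
  have hpre : (fun y => x - y) ⁻¹' {z | ρ ≤ ‖z‖} = (ball x ρ)ᶜ := by
    ext y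
    simp [dist_eq_norm, norm_sub_rev]
  rw [← hpre]
  exact (Measure.measurePreserving_sub_left μ x).setLIntegral_comp_preimage_emb
    (MeasurableEquiv.subLeft x).measurableEmbedding g _

theorem setLIntegral_norm_ge_le_setLIntegral_compl {E : Type*} [NormedAddCommGroup E]
    [NormedSpace ℝ E] [Nontrivial E] [MeasurableSpace E] [BorelSpace E] {μ : Measure E}
    [μ.IsNegInvariant] [μ.IsAddLeftInvariant] [NullSingletonClass μ] {K : E → ℝ}
    (hmono : ∀ x y : E, x ≠ 0 → y ≠ 0 → ‖x‖ ≤ ‖y‖ → K y ≤ K x) {x : E} {ρ : ℝ} (hρ : 0 < ρ)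
    {A : Set E} (hA : MeasurableSet A) (hvol : μ (ball x ρ) = μ A) (hfin : μ A ≠ ∞) :
    ∫⁻ z in {z | ρ ≤ ‖z‖}, ENNReal.ofReal (K z) ∂μ ≤
      ∫⁻ y in Aᶜ, ENNReal.ofReal (K (x - y)) ∂μ := by
  obtain ⟨z₀, hz₀⟩ := exists_norm_eq E hρ.le
  have hz₀ne : z₀ ≠ 0 := norm_ne_zero_iff.mp (hz₀ ▸ hρ.ne')
  rw [← setLIntegral_compl_ball_sub μ (fun z => ENNReal.ofReal (K z)) x ρ]
  refine setLIntegral_compl_le_of_measure_eq (t := ENNReal.ofReal (K z₀)) measurableSet_ball hA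
    hvol hfin (fun y hy => ?_) ?_
  · rw [mem_ball, dist_comm, dist_eq_norm, not_lt] at hy
    have hne : x - y ≠ 0 := norm_ne_zero_iff.mp (hρ.trans_le hy).ne'
    exact ENNReal.ofReal_le_ofReal (hmono z₀ (x - y) hz₀ne hne (hz₀ ▸ hy))
  · filter_upwards [μ.ae_ne x] with y hy hyB
    rw [mem_ball, dist_comm, dist_eq_norm] at hyB
    exact ENNReal.ofReal_le_ofReal
      (hmono (x - y) z₀ (sub_ne_zero.mpr hy.symm) hz₀ne (hz₀ ▸ hyB.le))

theorem exists_radius_addHaar_ball_eq {E : Type*} [NormedAddCommGroup E] [NormedSpace ℝ E]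
    [MeasurableSpace E] [BorelSpace E] [FiniteDimensional ℝ E] [Nontrivial E]
    (μ : Measure E) [μ.IsAddHaarMeasure] (x : E) {v : ℝ} (hv : 0 < v) :
    ∃ r, 0 < r ∧ (μ (ball 0 1)).toReal * r ^ finrank ℝ E = v ∧
      μ (ball x r) = ENNReal.ofReal v := by
  set ω := (μ (ball 0 1)).toReal
  have hω : 0 < ω := ENNReal.toReal_pos (measure_ball_pos μ 0 one_pos).ne' measure_ball_lt_top.ne
  set r := (v / ω) ^ (finrank ℝ E : ℝ)⁻¹
  have hvol : ω * r ^ finrank ℝ E = v := by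
    rw [Real.rpow_inv_natCast_pow (by positivity) finrank_pos.ne', mul_div_cancel₀ _ hω.ne']
  refine ⟨r, by positivity, hvol, ?_⟩
  rw [Measure.addHaar_ball μ x (by positivity), ← ENNReal.ofReal_toReal measure_ball_lt_top.ne,
    ← ENNReal.ofReal_mul (by positivity), mul_comm, hvol]

theorem mul_rpow_mul_pow_neg_div {ω r : ℝ} (hω : 0 < ω) (hr : 0 < r) {n : ℕ} (hn : n ≠ 0)
    (c a : ℝ) : c * ω ^ (a / n) * (ω * r ^ n) ^ (-(a / n)) = c / r ^ a := by
  rw [Real.mul_rpow hω.le (by positivity), ← Real.rpow_natCast, ← Real.rpow_mul hr.le, mul_neg,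
    mul_div_cancel₀ _ (Nat.cast_ne_zero.mpr hn), Real.rpow_neg hω.le, Real.rpow_neg hr.le]
  field_simp

theorem stmt6_general (N : ℕ) (hN : 2 ≤ N) (K : EuclideanSpace ℝ (Fin N) → ℝ)
    (hmono : ∀ x y : EuclideanSpace ℝ (Fin N), x ≠ 0 → y ≠ 0 → ‖x‖ ≤ ‖y‖ → K y ≤ K x)
    (hlinf : ∃ c : ℝ, 0 < c ∧ ∀ᶠ r in 𝓝[>] (0 : ℝ),
      ENNReal.ofReal c ≤ ENNReal.ofReal (r ^ (2 * kernelS0 N K)) * kernelTail N K r) :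
    ∃ C : ℝ, 0 < C ∧ ∃ δ : ℝ, 0 < δ ∧
      ∀ (x : EuclideanSpace ℝ (Fin N)) (E : Set (EuclideanSpace ℝ (Fin N))),
        MeasurableSet E → 0 < volume E → volume E ≤ ENNReal.ofReal δ →
        ENNReal.ofReal C * (volume E) ^ (-(2 * kernelS0 N K / N)) ≤
          ∫⁻ y in Eᶜ, ENNReal.ofReal (K (x - y)) := by
  obtain ⟨c, hc, hev⟩ := hlinf
  obtain ⟨ε, hε : 0 < ε, hsub⟩ := mem_nhdsGT_iff_exists_Ioo_subset.mp hev
  have : NeZero N := ⟨by omega⟩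
  set s := kernelS0 N K
  set ω := (volume (ball (0 : EuclideanSpace ℝ (Fin N)) 1)).toReal
  have hω : 0 < ω := ENNReal.toReal_pos (measure_ball_pos _ 0 one_pos).ne' measure_ball_lt_top.ne
  refine ⟨c * ω ^ (2 * s / N), by positivity, ω * (ε / 2) ^ N, by positivity, ?_⟩
  intro x E hE hEpos hEδ
  have hfin : volume E ≠ ∞ := ne_top_of_le_ne_top ENNReal.ofReal_ne_top hEδ
  obtain ⟨ρ, hρ, hωρ, hball⟩ :=
    exists_radius_addHaar_ball_eq volume x (ENNReal.toReal_pos hEpos.ne' hfin)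
  rw [finrank_euclideanSpace_fin] at hωρ
  rw [ENNReal.ofReal_toReal hfin] at hball
  have hρε : ρ < ε := by
    have hpow : ω * ρ ^ N ≤ ω * (ε / 2) ^ N :=
      hωρ ▸ ENNReal.toReal_le_of_le_ofReal (by positivity) hEδ
    have : ρ ≤ ε / 2 :=
      (pow_le_pow_iff_left₀ hρ.le (by positivity) (NeZero.ne N)).mp (le_of_mul_le_mul_left hpow hω)
    linarith
  have htail : ENNReal.ofReal (c / ρ ^ (2 * s)) ≤ kernelTail N K ρ := by
    rw [ENNReal.ofReal_div_of_pos (by positivity)]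
    exact ENNReal.div_le_of_le_mul' (hsub ⟨hρ, hρε⟩)
  calc ENNReal.ofReal (c * ω ^ (2 * s / N)) * volume E ^ (-(2 * s / N))
      = ENNReal.ofReal (c / ρ ^ (2 * s)) := by
        rw [← ENNReal.ofReal_toReal hfin, ← hωρ, ENNReal.ofReal_rpow_of_pos (by positivity),
          ← ENNReal.ofReal_mul (by positivity), mul_rpow_mul_pow_neg_div hω hρ (NeZero.ne N)]
    _ ≤ kernelTail N K ρ := htail
    _ ≤ ∫⁻ y in Eᶜ, ENNReal.ofReal (K (x - y)) :=
        setLIntegral_norm_ge_le_setLIntegral_compl hmono hρ hE hball hfin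

theorem stmt6 (N : ℕ) (hN : 2 ≤ N) (K : EuclideanSpace ℝ (Fin N) → ℝ)
    (hmeas : Measurable K)
    (hpos : ∀ x : EuclideanSpace ℝ (Fin N), x ≠ 0 → 0 < K x)
    (hint : kernelIntegrable N K)
    (hmono : ∀ x y : EuclideanSpace ℝ (Fin N), x ≠ 0 → y ≠ 0 → ‖x‖ ≤ ‖y‖ → K y ≤ K x)
    (hs0 : 0 < kernelS0 N K ∧ kernelS0 N K ≤ 1)
    (hlinf : ∃ c : ℝ, 0 < c ∧ ∀ᶠ r in 𝓝[>] (0 : ℝ),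
      ENNReal.ofReal c ≤ ENNReal.ofReal (r ^ (2 * kernelS0 N K)) * kernelTail N K r) :
    ∃ C : ℝ, 0 < C ∧ ∃ δ : ℝ, 0 < δ ∧
      ∀ (x : EuclideanSpace ℝ (Fin N)) (E : Set (EuclideanSpace ℝ (Fin N))),
        MeasurableSet E → 0 < volume E → volume E ≤ ENNReal.ofReal δ →
        ENNReal.ofReal C * (volume E) ^ (-(2 * kernelS0 N K / N)) ≤
          ∫⁻ y in Eᶜ, ENNReal.ofReal (K (x - y)) :=
  stmt6_general N hN K hmono hlinf
end

section
/- Let s ∈ (0,1) with 2s < N, T > 1, n ∈ ℤ, and let (a_k)_{k∈ℤ} be a bounded, nonnegative, decreasing sequence with a_k = 0 for all k ≥ n. Then there exists a constant C = C(s, T, N) > 0, independent of n, such that ∑_{k∈ℤ} a_k^{1 − 2s/N} T^k ≤ C ∑_{k∈ℤ, a_k ≠ 0} a_{k+1} a_k^{−2s/N} T^k. -/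
open Filter Topology Set
open scoped ENNReal

/-!
Write `α = 2s/N < 1`, `b k = a k ^ (1 - α) * T ^ k`, and pick `δ > 0` with `δ ^ (1 - α) * T = 1/2`.
If `a (k + 1) < δ * a k` then `b (k + 1) ≤ b k / 2`; otherwise
`b (k + 1) ≤ T * a k ^ (1 - α) * T ^ k ≤ (T / δ) * a (k + 1) * a k ^ (-α) * T ^ k`.
Summing over `k` and using that `∑ b` is invariant under the shift `k ↦ k + 1` gives
`∑ b ≤ (∑ b) / 2 + (T / δ) * ∑ a (k + 1) * a k ^ (-α) * T ^ k`, and `∑ b` is finite because `a`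
is bounded and vanishes from `n` on.
-/

lemma rpow_one_sub_le_mul_add_inv_mul {α δ x y : ℝ} (hα : α < 1) (hδ : 0 < δ) (hy : 0 ≤ y)
    (hyx : y ≤ x) : y ^ (1 - α) ≤ δ ^ (1 - α) * x ^ (1 - α) + δ⁻¹ * (y * x ^ (-α)) := by
  have hx : 0 ≤ x := hy.trans hyx
  rcases lt_or_ge y (δ * x) with hsmall | hlarge
  · calc y ^ (1 - α) ≤ (δ * x) ^ (1 - α) := Real.rpow_le_rpow hy hsmall.le (by linarith)
      _ = δ ^ (1 - α) * x ^ (1 - α) := Real.mul_rpow hδ.le hx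
      _ ≤ _ := le_add_of_nonneg_right (by positivity)
  · have hxy : x ≤ δ⁻¹ * y := by rwa [le_inv_mul_iff₀ hδ]
    calc y ^ (1 - α) ≤ x ^ (1 - α) := Real.rpow_le_rpow hy hyx (by linarith)
      _ = x * x ^ (-α) := by
        rw [sub_eq_add_neg, Real.rpow_add' hx (by linarith), Real.rpow_one]
      _ ≤ δ⁻¹ * y * x ^ (-α) := mul_le_mul_of_nonneg_right hxy (by positivity)
      _ ≤ _ := by rw [mul_assoc]; exact le_add_of_nonneg_left (by positivity)

lemma tsum_ofReal_mul_zpow_ne_top {T M : ℝ} (hT : 1 < T) {g : ℤ → ℝ} {n : ℤ}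
    (hg0 : ∀ k, 0 ≤ g k) (hgM : ∀ k, g k ≤ M) (hgn : ∀ k, n ≤ k → g k = 0) :
    ∑' k : ℤ, ENNReal.ofReal (g k * T ^ k) ≠ ∞ := by
  have hT0 : 0 < T := zero_lt_one.trans hT
  rw [← ENNReal.ofReal_tsum_of_nonneg (fun k => by have := hg0 k; positivity)]
  · exact ENNReal.ofReal_ne_top
  refine Summable.of_nat_of_neg ?_ ?_
  · refine summable_of_ne_finset_zero (s := Finset.range n.toNat) fun j hj => ?_
    rw [hgn j (by simp at hj; omega), zero_mul]
  · refine Summable.of_nonneg_of_le (fun j => by have := hg0 (-j); positivity) (fun j => ?_)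
      ((summable_geometric_of_lt_one (by positivity) (inv_lt_one_of_one_lt₀ hT)).mul_left M)
    rw [zpow_neg, zpow_natCast, ← inv_pow]
    exact mul_le_mul_of_nonneg_right (hgM _) (by positivity)

lemma ENNReal.le_two_mul_of_le_half_add {x y : ℝ≥0∞} (hx : x ≠ ∞) (h : x ≤ x / 2 + y) :
    x ≤ 2 * y := by
  have hy : x / 2 ≤ y :=
    ENNReal.le_of_add_le_add_left (ENNReal.div_ne_top hx two_ne_zero) (by rwa [ENNReal.add_halves])
  calc x = 2 * (x / 2) := (ENNReal.mul_div_cancel two_ne_zero ENNReal.ofNat_ne_top).symm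
    _ ≤ 2 * y := by gcongr

theorem tsum_rpow_mul_zpow_le_of_antitone {α T δ : ℝ} (hα : α < 1) (hT : 0 < T) (hδ : 0 < δ)
    (hδT : δ ^ (1 - α) * T = 2⁻¹) {a : ℤ → ℝ} (ha0 : ∀ k, 0 ≤ a k) (ha : Antitone a)
    (hfin : ∑' k : ℤ, ENNReal.ofReal (a k ^ (1 - α) * T ^ k) ≠ ∞) :
    ∑' k : ℤ, ENNReal.ofReal (a k ^ (1 - α) * T ^ k) ≤
      ENNReal.ofReal (2 * T / δ) * ∑' k : ℤ, ENNReal.ofReal (a (k + 1) * a k ^ (-α) * T ^ k) := by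
  set S := ∑' k : ℤ, ENNReal.ofReal (a k ^ (1 - α) * T ^ k)
  set R := ∑' k : ℤ, ENNReal.ofReal (a (k + 1) * a k ^ (-α) * T ^ k)
  have step (k : ℤ) : a (k + 1) ^ (1 - α) * T ^ (k + 1) ≤
      a k ^ (1 - α) * T ^ k / 2 + T / δ * (a (k + 1) * a k ^ (-α) * T ^ k) := by
    have h :=
      rpow_one_sub_le_mul_add_inv_mul hα hδ (ha0 (k + 1)) (ha (Int.le_add_one le_rfl))
    have hTk : 0 < T ^ k := zpow_pos hT k
    calc a (k + 1) ^ (1 - α) * T ^ (k + 1) = a (k + 1) ^ (1 - α) * T ^ k * T := by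
          rw [zpow_add_one₀ hT.ne']; ring
      _ ≤ (δ ^ (1 - α) * a k ^ (1 - α) + δ⁻¹ * (a (k + 1) * a k ^ (-α))) * T ^ k * T := by
          gcongr
      _ = _ := by linear_combination (a k ^ (1 - α) * T ^ k) * hδT
  have hhalf : S ≤ S / 2 + ENNReal.ofReal (T / δ) * R := by
    calc S = ∑' k : ℤ, ENNReal.ofReal (a (k + 1) ^ (1 - α) * T ^ (k + 1)) :=
          ((Equiv.addRight (1 : ℤ)).tsum_eq fun k => ENNReal.ofReal (a k ^ (1 - α) * T ^ k)).symm
      _ ≤ ∑' k : ℤ, (ENNReal.ofReal (a k ^ (1 - α) * T ^ k) / 2 +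
            ENNReal.ofReal (T / δ) * ENNReal.ofReal (a (k + 1) * a k ^ (-α) * T ^ k)) := by
          refine ENNReal.tsum_le_tsum fun k => (ENNReal.ofReal_le_ofReal (step k)).trans ?_
          have hb : 0 ≤ a k ^ (1 - α) * T ^ k := by have := ha0 k; positivity
          have hr : 0 ≤ a (k + 1) * a k ^ (-α) * T ^ k := by
            have := ha0 k; have := ha0 (k + 1); positivity
          rw [ENNReal.ofReal_add (by positivity) (by positivity), ENNReal.ofReal_div_of_pos two_pos,
            ENNReal.ofReal_ofNat, ENNReal.ofReal_mul (div_pos hT hδ).le]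
      _ = S / 2 + ENNReal.ofReal (T / δ) * R := by
          simp_rw [div_eq_mul_inv]
          rw [ENNReal.tsum_add, ENNReal.tsum_mul_right, ENNReal.tsum_mul_left]
  calc S ≤ 2 * (ENNReal.ofReal (T / δ) * R) := ENNReal.le_two_mul_of_le_half_add hfin hhalf
    _ = ENNReal.ofReal (2 * T / δ) * R := by
      rw [← mul_assoc, mul_div_assoc, ENNReal.ofReal_mul zero_le_two, ENNReal.ofReal_ofNat]

theorem stmt8_general (N : ℕ) (s : ℝ) (hsN : 2 * s < N) (T : ℝ) (hT : 1 < T) :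
    ∃ C : ℝ, 0 < C ∧
      ∀ (n : ℤ) (a : ℤ → ℝ),
        (∃ M : ℝ, ∀ k, a k ≤ M) →
        (∀ k, 0 ≤ a k) →
        (∀ k l : ℤ, k ≤ l → a l ≤ a k) →
        (∀ k, n ≤ k → a k = 0) →
        (∑' k : ℤ, ENNReal.ofReal (a k ^ (1 - 2 * s / N) * T ^ k)) ≤
          ENNReal.ofReal C *
            ∑' k : {k : ℤ // a k ≠ 0},
              ENNReal.ofReal (a ((k : ℤ) + 1) * a (k : ℤ) ^ (-(2 * s / N)) * T ^ (k : ℤ)) := by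
  set α := 2 * s / N
  have hα : α < 1 := by
    rcases N.eq_zero_or_pos with rfl | hN
    · simp [α] -- `2 * s / 0 = 0`
    · exact (div_lt_one (by exact_mod_cast hN)).2 hsN
  have hT0 : 0 < T := zero_lt_one.trans hT
  obtain ⟨δ, hδ, hδT⟩ : ∃ δ : ℝ, 0 < δ ∧ δ ^ (1 - α) * T = 2⁻¹ :=
    ⟨(2 * T)⁻¹ ^ (1 - α)⁻¹, by positivity, by
      rw [← Real.rpow_mul (by positivity), inv_mul_cancel₀ (by linarith), Real.rpow_one]
      field_simp⟩
  refine ⟨2 * T / δ, by positivity, fun n a ⟨M, hM⟩ ha0 ha hn => ?_⟩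
  have hsupp : Function.support (fun k => ENNReal.ofReal (a (k + 1) * a k ^ (-α) * T ^ k)) ⊆
      {k | a k ≠ 0} := by
    intro k hk h0
    have : a (k + 1) = 0 := le_antisymm (h0 ▸ ha k (k + 1) (by omega)) (ha0 _)
    simp [this] at hk
  refine (tsum_rpow_mul_zpow_le_of_antitone hα hT0 hδ hδT ha0 ha ?_).trans_eq
    (congrArg _ (tsum_subtype_eq_of_support_subset hsupp).symm)
  exact tsum_ofReal_mul_zpow_ne_top hT (g := fun k => a k ^ (1 - α)) (M := M ^ (1 - α))
    (fun k => Real.rpow_nonneg (ha0 k) _)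
    (fun k => Real.rpow_le_rpow (ha0 k) (hM k) (by linarith)) (n := n)
    (fun k hk => by simp [hn k hk, Real.zero_rpow (by linarith : 1 - α ≠ 0)])

theorem stmt8 (N : ℕ) (hN : 1 ≤ N) (s : ℝ) (hs : 0 < s) (hs1 : s < 1)
    (hsN : 2 * s < N) (T : ℝ) (hT : 1 < T) :
    ∃ C : ℝ, 0 < C ∧
      ∀ (n : ℤ) (a : ℤ → ℝ),
        (∃ M : ℝ, ∀ k, a k ≤ M) →
        (∀ k, 0 ≤ a k) →
        (∀ k l : ℤ, k ≤ l → a l ≤ a k) →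
        (∀ k, n ≤ k → a k = 0) →
        (∑' k : ℤ, ENNReal.ofReal (a k ^ (1 - 2 * s / N) * T ^ k)) ≤
          ENNReal.ofReal C *
            ∑' k : {k : ℤ // a k ≠ 0},
              ENNReal.ofReal (a ((k : ℤ) + 1) * a (k : ℤ) ^ (-(2 * s / N)) * T ^ (k : ℤ)) :=
  stmt8_general N s hsN T hT
end

section
/- Under the hypotheses of the kernel Sobolev inequality (kernel K with exponent s₀ ∈ (0,1] and bounded domain Ω ⊂ ℝ^N), the two norms on X₀ := {g : ℝ^N → ℝ measurable, g = 0 a.e. on Ω^c, energy finite} given by ‖g‖_X = (‖g‖²_{L²(Ω)} + ∬ |g(x)−g(y)|²K(x−y)dxdy)^{1/2} and ‖g‖_{X₀} = (∬ |g(x)−g(y)|²K(x−y)dxdy)^{1/2} are equivalent: there exists C > 0 with ‖g‖_{X₀} ≤ ‖g‖_X ≤ C ‖g‖_{X₀} for all g ∈ X₀. -/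
/-!
A Poincaré inequality, which needs no Sobolev embedding: if `g` vanishes outside the ball of
radius `R`, then whenever `g x ≠ 0` and `‖x - y‖ ≥ r > 2R` we have `g y = 0`, so the energy
integrand at `(x, y)` is `g(x)² K(x - y)`. Integrating in `y` first bounds the energy from below
by `κ ∫ g²`, where `κ = ∫_{‖z‖ ≥ r} K > 0` is the tail mass of the kernel. Hence
`∫_Ω g² + E ≤ (κ⁻¹ + 1) E`.
-/

open MeasureTheory Filter Topology Set
open scoped ENNReal

noncomputable def kernelEnergy (N : ℕ) (K g : EuclideanSpace ℝ (Fin N) → ℝ) : ℝ≥0∞ :=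
  ∫⁻ x : EuclideanSpace ℝ (Fin N), ∫⁻ y : EuclideanSpace ℝ (Fin N),
    ENNReal.ofReal ((g x - g y) ^ 2 * K (x - y))

namespace ENNReal

theorem rpow_mul_le_mul_rpow {a x : ℝ≥0∞} {p : ℝ} (ha : 1 ≤ a) (hp₀ : 0 ≤ p) (hp₁ : p ≤ 1) :
    (a * x) ^ p ≤ a * x ^ p := by
  rw [mul_rpow_of_nonneg _ _ hp₀]
  gcongr
  calc a ^ p ≤ a ^ (1 : ℝ) := rpow_le_rpow_of_exponent_le ha hp₁
    _ = a := rpow_one a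

theorem add_le_inv_add_one_mul {c I E : ℝ≥0∞} (hc : c ≠ 0) (hE : E ≠ ⊤) (h : c * I ≤ E) :
    I + E ≤ (c⁻¹ + 1) * E := by
  have hI : I ≤ c⁻¹ * E := by
    rwa [mul_comm, ← div_eq_mul_inv, ENNReal.le_div_iff_mul_le (.inl hc) (.inr hE), mul_comm]
  rw [add_mul, one_mul]
  gcongr

end ENNReal

section KernelTail

variable {N : ℕ} {K : EuclideanSpace ℝ (Fin N) → ℝ}

theorem kernelTail_pos (hN : 0 < N) (hmeas : Measurable K) (hpos : ∀ x, x ≠ 0 → 0 < K x)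
    (r : ℝ) : 0 < kernelTail N K r := by
  set U : Set (EuclideanSpace ℝ (Fin N)) := {y | max r 0 < ‖y‖}
  have hKU : U ⊆ Function.support fun y => ENNReal.ofReal (K y) := fun y hy => by
    have hy0 : y ≠ 0 := norm_pos_iff.1 ((le_max_right r 0).trans_lt hy)
    simpa using hpos y hy0
  have hUne : U.Nonempty := ⟨EuclideanSpace.single ⟨0, hN⟩ (max r 0 + 1), by
    change max r 0 < ‖_‖
    rw [PiLp.norm_single, Real.norm_of_nonneg (by positivity)]
    linarith⟩
  calc 0 < ∫⁻ y in U, ENNReal.ofReal (K y) := by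
        rw [setLIntegral_pos_iff hmeas.ennreal_ofReal, inter_eq_right.2 hKU]
        exact (isOpen_lt continuous_const continuous_norm).measure_pos _ hUne
    _ ≤ kernelTail N K r :=
        lintegral_mono_set fun y hy => (le_max_left r 0).trans (le_of_lt hy)

variable {g : EuclideanSpace ℝ (Fin N) → ℝ} {R r : ℝ}

theorem ofReal_sq_mul_kernelTail_le (hg : Function.support g ⊆ Metric.closedBall 0 R)
    (hr : 2 * R < r) (x : EuclideanSpace ℝ (Fin N)) :
    ENNReal.ofReal (g x ^ 2) * kernelTail N K r ≤
      ∫⁻ y, ENNReal.ofReal ((g x - g y) ^ 2 * K (x - y)) := by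
  have hfar : ∀ y, r ≤ ‖x - y‖ → g x = 0 ∨ g y = 0 := by
    intro y hy
    by_contra! h
    have hx := mem_closedBall_zero_iff.1 (hg h.1)
    have hy' := mem_closedBall_zero_iff.1 (hg h.2)
    linarith [norm_sub_le x y]
  rw [kernelTail, ← lintegral_indicator (measurableSet_le measurable_const measurable_norm),
    ← lintegral_sub_left_eq_self _ x]
  refine (lintegral_const_mul_le _ _).trans (lintegral_mono fun y => ?_)
  by_cases hy : x - y ∈ {z : EuclideanSpace ℝ (Fin N) | r ≤ ‖z‖}
  · rw [indicator_of_mem hy]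
    rcases hfar y hy with h | h
    · simp [h]
    · rw [h, sub_zero, ENNReal.ofReal_mul (sq_nonneg _)]
  · simp [indicator_of_notMem hy]

theorem kernelTail_mul_lintegral_sq_le_kernelEnergy
    (hg : Function.support g ⊆ Metric.closedBall 0 R) (hr : 2 * R < r) :
    kernelTail N K r * ∫⁻ x, ENNReal.ofReal (g x ^ 2) ≤ kernelEnergy N K g :=
  (lintegral_const_mul_le _ _).trans <| lintegral_mono fun x => by
    rw [mul_comm]
    exact ofReal_sq_mul_kernelTail_le hg hr x

end KernelTail

theorem stmt11_general (N : ℕ) (hN : 2 ≤ N) (K : EuclideanSpace ℝ (Fin N) → ℝ)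
    (hmeas : Measurable K)
    (hpos : ∀ x : EuclideanSpace ℝ (Fin N), x ≠ 0 → 0 < K x)
    (Ω : Set (EuclideanSpace ℝ (Fin N))) (hΩb : Bornology.IsBounded Ω) :
    ∃ C : ℝ, 0 < C ∧
      ∀ g : EuclideanSpace ℝ (Fin N) → ℝ, Measurable g → (∀ x ∉ Ω, g x = 0) →
        kernelEnergy N K g < ⊤ →
        (kernelEnergy N K g) ^ ((1 : ℝ) / 2) ≤
            ((∫⁻ x in Ω, ENNReal.ofReal ((g x) ^ 2)) + kernelEnergy N K g) ^ ((1 : ℝ) / 2) ∧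
          ((∫⁻ x in Ω, ENNReal.ofReal ((g x) ^ 2)) + kernelEnergy N K g) ^ ((1 : ℝ) / 2) ≤
            ENNReal.ofReal C * (kernelEnergy N K g) ^ ((1 : ℝ) / 2) := by
  obtain ⟨R, hR⟩ := hΩb.subset_closedBall 0
  set c := kernelTail N K (2 * R + 1)
  have hc : c ≠ 0 := (kernelTail_pos (by omega) hmeas hpos _).ne'
  have hC : c⁻¹ + 1 ≠ ⊤ := ENNReal.add_ne_top.2 ⟨ENNReal.inv_ne_top.2 hc, ENNReal.one_ne_top⟩
  refine ⟨(c⁻¹ + 1).toReal, ENNReal.toReal_pos (by positivity) hC, fun g _ hgΩ hE =>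
    ⟨ENNReal.rpow_le_rpow le_add_self (by norm_num), ?_⟩⟩
  have hsupp : Function.support g ⊆ Metric.closedBall 0 R := fun x hx =>
    hR (by_contra fun hxΩ => hx (hgΩ x hxΩ))
  have hkey : c * ∫⁻ x in Ω, ENNReal.ofReal (g x ^ 2) ≤ kernelEnergy N K g :=
    (mul_le_mul_right (setLIntegral_le_lintegral _ _) c).trans
      (kernelTail_mul_lintegral_sq_le_kernelEnergy hsupp (by linarith))
  rw [ENNReal.ofReal_toReal hC]
  exact (ENNReal.rpow_le_rpow (ENNReal.add_le_inv_add_one_mul hc hE.ne hkey) (by norm_num)).trans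
    (ENNReal.rpow_mul_le_mul_rpow le_add_self (by norm_num) (by norm_num))

theorem stmt11 (N : ℕ) (hN : 2 ≤ N) (K : EuclideanSpace ℝ (Fin N) → ℝ)
    (hmeas : Measurable K)
    (hpos : ∀ x : EuclideanSpace ℝ (Fin N), x ≠ 0 → 0 < K x)
    (hint : kernelIntegrable N K)
    (hsym : ∀ x : EuclideanSpace ℝ (Fin N), K (-x) = K x)
    (hmono : ∀ x y : EuclideanSpace ℝ (Fin N), x ≠ 0 → y ≠ 0 → ‖x‖ ≤ ‖y‖ → K y ≤ K x)
    (hs0 : 0 < kernelS0 N K ∧ kernelS0 N K ≤ 1)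
    (Ω : Set (EuclideanSpace ℝ (Fin N))) (hΩo : IsOpen Ω) (hΩb : Bornology.IsBounded Ω) :
    ∃ C : ℝ, 0 < C ∧
      ∀ g : EuclideanSpace ℝ (Fin N) → ℝ, Measurable g → (∀ x ∉ Ω, g x = 0) →
        kernelEnergy N K g < ⊤ →
        (kernelEnergy N K g) ^ ((1 : ℝ) / 2) ≤
            ((∫⁻ x in Ω, ENNReal.ofReal ((g x) ^ 2)) + kernelEnergy N K g) ^ ((1 : ℝ) / 2) ∧
          ((∫⁻ x in Ω, ENNReal.ofReal ((g x) ^ 2)) + kernelEnergy N K g) ^ ((1 : ℝ) / 2) ≤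
            ENNReal.ofReal C * (kernelEnergy N K g) ^ ((1 : ℝ) / 2) :=
  stmt11_general N hN K hmeas hpos Ω hΩb
end
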